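/- Let k₂ > 0, L > 0, T > 0, r ∈ ℕ, and let t₀ < t₁ < t₂ < ... < t_{2r+1} with t_{2r+1} - t₀ < T/2. Let w₁, w₂ : [t₀, t_{2r+1}] → ℝ be continuous with w₁(t) = w₁(t₀) + ∫_{t₀}^{t} w₂(s) ds, w₁(t_{2r+1}) = 0, w₂(t) ≥ 0 on each [t_{2i-1}, t_{2i}] for i = 1,…,r, and ∫_{t_{2i}}^{t_{2i+1}} w₂(t) dt ≥ -(1/2)(k₂ + L)(t_{2i+1} - t_{2i})² for i = 0,…,r. Then w₁(t₀) < (1/8)(k₂ + L) T². -/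
import Mathlib


theorem stmt_11 (k₂ L T : ℝ) (hk₂ : 0 < k₂) (hL : 0 < L) (hT : 0 < T)
    (r : ℕ) (t : ℕ → ℝ) (hmono : ∀ i < 2 * r + 1, t i < t (i + 1))
    (hspan : t (2 * r + 1) - t 0 < T / 2)
    (w₁ w₂ : ℝ → ℝ) (hw₂ : ContinuousOn w₂ (Set.Icc (t 0) (t (2 * r + 1))))
    (hint : ∀ s ∈ Set.Icc (t 0) (t (2 * r + 1)),
      w₁ s = w₁ (t 0) + ∫ u in (t 0)..s, w₂ u)
    (hend : w₁ (t (2 * r + 1)) = 0)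
    (hpos : ∀ i, 1 ≤ i → i ≤ r →
      ∀ s ∈ Set.Icc (t (2 * i - 1)) (t (2 * i)), 0 ≤ w₂ s)
    (hseg : ∀ i ≤ r,
      -(1 / 2) * (k₂ + L) * (t (2 * i + 1) - t (2 * i)) ^ 2 ≤
        ∫ s in (t (2 * i))..(t (2 * i + 1)), w₂ s) :
    w₁ (t 0) < (1 / 8) * (k₂ + L) * T ^ 2 := by
  set n := 2 * r + 1 with hn
  -- monotonicity of t on [0, n]
  have key : ∀ j, j ≤ n → ∀ i, i ≤ j → t i ≤ t j := by
    intro j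
    induction j with
    | zero => intro _ i hi; interval_cases i; exact le_rfl
    | succ m ih =>
      intro hj i hi
      rcases eq_or_lt_of_le hi with h | h
      · rw [h]
      · exact (ih (by omega) i (by omega)).trans (hmono m (by omega)).le
  -- interval integrability on subintervals
  have hintg : ∀ i j, i ≤ j → j ≤ n → IntervalIntegrable w₂ MeasureTheory.volume (t i) (t j) := by
    intro i j hij hj
    apply (hw₂.mono _).intervalIntegrable
    rw [Set.uIcc_of_le (key j hj i hij)]
    exact Set.Icc_subset_Icc (key i (by omega) 0 (by omega)) (key n le_rfl j hj)
  -- telescoping sum of integrals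
  have hsum : ∑ j ∈ Finset.range n, ∫ s in (t j)..(t (j + 1)), w₂ s
      = ∫ s in (t 0)..(t n), w₂ s :=
    intervalIntegral.sum_integral_adjacent_intervals
      (fun k hk => hintg k (k + 1) (by omega) (by omega))
  -- per-segment lower bound
  have hterm : ∀ j < n,
      -(1 / 2) * (k₂ + L) * (t (j + 1) - t j) ^ 2 ≤ ∫ s in (t j)..(t (j + 1)), w₂ s := by
    intro j hj
    rcases Nat.even_or_odd j with ⟨i, hi⟩ | ⟨i, hi⟩
    · have h1 : 2 * i = j := by omega
      have h2 : 2 * i + 1 = j + 1 := by omega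
      have := hseg i (by omega)
      rw [h2, h1] at this
      exact this
    · have h1 : 2 * (i + 1) - 1 = j := by omega
      have h2 : 2 * (i + 1) = j + 1 := by omega
      have hnn := hpos (i + 1) (by omega) (by omega)
      rw [h1, h2] at hnn
      have h0 : (0 : ℝ) ≤ ∫ s in (t j)..(t (j + 1)), w₂ s :=
        intervalIntegral.integral_nonneg (hmono j hj).le hnn
      nlinarith [sq_nonneg (t (j + 1) - t j), hk₂.le, hL.le]
  -- sum of squares bound
  have hS : ∑ j ∈ Finset.range n, (t (j + 1) - t j) = t n - t 0 :=
    Finset.sum_range_sub t n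
  have hSnn : (0 : ℝ) ≤ t n - t 0 := by
    have := key n le_rfl 0 (by omega); linarith
  have hsq : ∑ j ∈ Finset.range n, (t (j + 1) - t j) ^ 2 ≤ (t n - t 0) ^ 2 := by
    calc ∑ j ∈ Finset.range n, (t (j + 1) - t j) ^ 2
        ≤ ∑ j ∈ Finset.range n, (t (j + 1) - t j) * (t n - t 0) := by
          apply Finset.sum_le_sum
          intro j hj
          have hd : t (j + 1) - t j ≤ t n - t 0 := by
            rw [← hS]
            exact Finset.single_le_sum
              (f := fun j => t (j + 1) - t j)
              (fun k hk => sub_nonneg.mpr (hmono k (Finset.mem_range.mp hk)).le) hj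
          have hdn : (0 : ℝ) ≤ t (j + 1) - t j := by
            have := hmono j (Finset.mem_range.mp hj); linarith
          nlinarith
      _ = (t n - t 0) ^ 2 := by rw [← Finset.sum_mul, hS]; ring
  -- total integral lower bound
  have hI : -(1 / 2) * (k₂ + L) * (t n - t 0) ^ 2 ≤ ∫ s in (t 0)..(t n), w₂ s := by
    rw [← hsum]
    calc -(1 / 2) * (k₂ + L) * (t n - t 0) ^ 2
        ≤ -(1 / 2) * (k₂ + L) * ∑ j ∈ Finset.range n, (t (j + 1) - t j) ^ 2 := by
          nlinarith [hsq, hk₂.le, hL.le]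
      _ = ∑ j ∈ Finset.range n, -(1 / 2) * (k₂ + L) * (t (j + 1) - t j) ^ 2 := by
          rw [Finset.mul_sum]
      _ ≤ ∑ j ∈ Finset.range n, ∫ s in (t j)..(t (j + 1)), w₂ s :=
          Finset.sum_le_sum (fun j hj => hterm j (Finset.mem_range.mp hj))
  -- express w₁ (t 0)
  have hmem : t n ∈ Set.Icc (t 0) (t n) := ⟨key n le_rfl 0 (by omega), le_rfl⟩
  have heq := hint (t n) hmem
  rw [hend] at heq
  have hw1 : w₁ (t 0) = -∫ s in (t 0)..(t n), w₂ s := by linarith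
  rw [hw1]
  have hsq2 : (t n - t 0) ^ 2 < (T / 2) ^ 2 := by
    have := sq_lt_sq' (by linarith : -(T / 2) < t n - t 0) hspan
    exact this
  nlinarith [hI, hk₂.le, hL.le]
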